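/- arXiv:1807.04957 — 9 statements merged into one kernel-verified Lean document; each statement's English description precedes it below -/
import Mathlib

section
/- Let L be a finite lattice whose Möbius function is nonvanishing (μ(x,y) ≠ 0 for all x ≤ y), let F ⊆ L, and suppose z ∈ L is not shattered by F. Then there exist coefficients γ_y ∈ ℚ, indexed by y < z, such that for all p ∈ F, χ_z(p) = Σ_{y<z} γ_y χ_y(p), where χ_x(p) = 1 if p ≥ x and 0 otherwise. -/
open scoped Classical

/-- `F` shatters `z`: for every `x ≤ z` there is `w ∈ F` with `w ⊓ z = x`. -/
def Shatters {L : Type*} [SemilatticeInf L] (F : Set L) (z : L) : Prop :=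
  ∀ x ≤ z, ∃ w ∈ F, w ⊓ z = x

/-- The set of elements shattered by `F`. -/
def Str {L : Type*} [SemilatticeInf L] (F : Set L) : Set L := {z | Shatters F z}


/-- The Möbius function of a finite poset. -/
noncomputable def mu {L : Type*} [PartialOrder L] [Fintype L] (x y : L) : ℚ :=
  if x = y then 1
  else if x ≤ y then
    - ∑ z ∈ (Finset.univ.filter fun z => x ≤ z ∧ z < y).attach, mu x z.1
  else 0
termination_by (Finset.univ.filter fun z : L => z < y).card
decreasing_by
  · have hz := (Finset.mem_filter.mp z.2).2.2
    apply Finset.card_lt_card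
    constructor
    · intro w hw
      simp only [Finset.mem_filter, Finset.mem_univ, true_and] at hw ⊢
      exact hw.trans hz
    · intro hsub
      have hmem : z.1 ∈ Finset.univ.filter fun w : L => w < y := by simp [hz]
      have := hsub hmem
      simp at this

/-!
Since `z` is not shattered, some `x ≤ z` differs from `p ⊓ z` for every `p ∈ F`. The defining
recursion of `μ` gives `∑_{x ≤ y ≤ z} μ(x, y) χ_y(p) = [p ⊓ z = x]`, which therefore vanishes on `F`;
as `μ(x, z) ≠ 0`, solving for the term `y = z` writes `χ_z` as a combination of the `χ_y`, `y < z`.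
-/

lemma mu_self {L : Type*} [PartialOrder L] [Fintype L] (x : L) : mu x x = 1 := by
  rw [mu, if_pos rfl]

lemma mu_of_lt {L : Type*} [PartialOrder L] [Fintype L] {x y : L} (h : x < y) :
    mu x y = -∑ w ∈ Finset.univ.filter fun w => x ≤ w ∧ w < y, mu x w := by
  rw [mu, if_neg h.ne, if_pos h.le, Finset.sum_attach]

lemma filter_le_le_eq_insert {L : Type*} [PartialOrder L] [Fintype L] {x m : L} (h : x ≤ m) :
    (Finset.univ.filter fun y => x ≤ y ∧ y ≤ m) =
      insert m (Finset.univ.filter fun y => x ≤ y ∧ y < m) := by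
  ext y
  simp only [Finset.mem_insert, Finset.mem_filter, Finset.mem_univ, true_and]
  by_cases hy : y = m
  · simp [hy, h]
  · simp [hy, lt_iff_le_and_ne]

lemma sum_mu_eq_ite {L : Type*} [PartialOrder L] [Fintype L] {x m : L} (h : x ≤ m) :
    ∑ y ∈ Finset.univ.filter (fun y => x ≤ y ∧ y ≤ m), mu x y = if x = m then 1 else 0 := by
  rcases h.eq_or_lt with rfl | hlt
  · rw [filter_le_le_eq_insert le_rfl, Finset.sum_insert (by simp), if_pos rfl, mu_self,
      Finset.sum_eq_zero, add_zero]
    intro y hy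
    simp only [Finset.mem_filter] at hy
    exact absurd (hy.2.1.trans_lt hy.2.2) (lt_irrefl x)
  · rw [if_neg hlt.ne, filter_le_le_eq_insert hlt.le, Finset.sum_insert (by simp), mu_of_lt hlt]
    ring

/-- The terms with `y ≤ p` form the Möbius sum over the interval `[x, p ⊓ z]`. -/
lemma sum_mu_mul_indicator_eq_ite {L : Type*} [SemilatticeInf L] [Fintype L] (x z p : L) :
    ∑ y ∈ Finset.univ.filter (fun y => x ≤ y ∧ y ≤ z), mu x y * (if y ≤ p then 1 else 0) =
      if x = p ⊓ z then 1 else 0 := by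
  simp only [mul_ite, mul_one, mul_zero]
  rw [← Finset.sum_filter, Finset.filter_filter]
  simp only [and_assoc, ← le_inf_iff, inf_comm z p]
  by_cases hxp : x ≤ p ⊓ z
  · exact sum_mu_eq_ite hxp
  · rw [if_neg (fun h => hxp h.le), Finset.sum_eq_zero]
    intro y hy
    exact absurd ((Finset.mem_filter.mp hy).2.1.trans (Finset.mem_filter.mp hy).2.2) hxp

/-- If the Möbius function of `L` is nonvanishing and `z` is not shattered by `F`,
then `χ_z` restricted to `F` is a linear combination of `χ_y` for `y < z`. -/
theorem elimination {L : Type*} [Lattice L] [Fintype L]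
    (hmu : ∀ x y : L, x ≤ y → mu x y ≠ 0)
    (F : Set L) (z : L) (hz : ¬ Shatters F z) :
    ∃ γ : L → ℚ, ∀ p ∈ F,
      (if z ≤ p then (1 : ℚ) else 0) =
        ∑ y ∈ Finset.univ.filter fun y : L => y < z,
          γ y * (if y ≤ p then (1 : ℚ) else 0) := by
  obtain ⟨x, hxz, hx⟩ : ∃ x ≤ z, ∀ p ∈ F, x ≠ p ⊓ z := by
    simpa [Shatters, eq_comm] using hz
  have hc : mu x z ≠ 0 := hmu x z hxz
  refine ⟨fun y => if x ≤ y then -mu x y / mu x z else 0, fun p hp => ?_⟩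
  have hsum := sum_mu_mul_indicator_eq_ite x z p
  rw [if_neg (hx p hp), filter_le_le_eq_insert hxz, Finset.sum_insert (by simp)] at hsum
  have hrhs : ∑ y ∈ Finset.univ.filter (fun y : L => y < z),
      (if x ≤ y then -mu x y / mu x z else 0) * (if y ≤ p then (1 : ℚ) else 0) =
        -(∑ y ∈ Finset.univ.filter (fun y => x ≤ y ∧ y < z),
          mu x y * (if y ≤ p then 1 else 0)) / mu x z := by
    rw [neg_div, Finset.sum_div, ← Finset.sum_neg_distrib, Finset.sum_filter, Finset.sum_filter]
    refine Finset.sum_congr rfl fun y _ => ?_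
    split_ifs <;> first | ring1 | tauto
  rw [hrhs]
  field_simp
  linarith
end

section
/- Let L be a finite lattice that is not relatively complemented, i.e., there exist x < y in L such that exactly one element z satisfies x < z < y. Then there exists a family F ⊆ L that shatters strictly fewer than |F| elements. -/
open scoped Classical

/-!
Let `x < z < y` be a three-element interval and take `F = Iic y \ {x}`. Anything shattered by `F`
lies below some member of `F`, hence below `y`. But `y` is not shattered, since `w ⊓ y = w ≠ x`
for every `w ∈ F`; and `z` is not shattered, since the members of `F` above `x` are exactly `z`
and `y`, both above `z`. So `F` shatters at most `|Iic y| - 2 < |F|` elements.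
-/

open Set

theorem Set.ncard_sdiff_pair_lt_ncard_sdiff_singleton {α : Type*} {s : Set α} {a b : α}
    (hs : s.Finite) (ha : a ∈ s) (hb : b ∈ s) (hab : a ≠ b) (c : α) :
    (s \ {a, b}).ncard < (s \ {c}).ncard := by
  have hpair : (s \ {a, b}).ncard = s.ncard - 2 := by
    rw [ncard_sdiff (pair_subset ha hb) (toFinite _), ncard_pair hab]
  have hpos : 2 ≤ s.ncard := ncard_pair hab ▸ ncard_le_ncard (pair_subset ha hb) hs
  have := pred_ncard_le_ncard_sdiff_singleton s c
  omega

theorem le_of_Ioo_eq_singleton {α : Type*} [PartialOrder α] {x y z w : α}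
    (h : Ioo x y = {z}) (hxw : x < w) (hwy : w ≤ y) : z ≤ w := by
  rcases hwy.eq_or_lt with rfl | hwy
  · exact (h ▸ mem_singleton z : z ∈ Ioo x w).2.le
  · exact (h ▸ (⟨hxw, hwy⟩ : w ∈ Ioo x y) : w ∈ ({z} : Set α)).ge

section Shatters

variable {L : Type*} [SemilatticeInf L] {F : Set L} {x y z : L}

theorem Shatters.exists_mem_le (h : Shatters F z) : ∃ w ∈ F, z ≤ w := by
  obtain ⟨w, hw, hwz⟩ := h z le_rfl
  exact ⟨w, hw, hwz ▸ inf_le_left⟩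

theorem Str_subset_Iic (hF : F ⊆ Iic y) : Str F ⊆ Iic y := by
  intro z hz
  obtain ⟨w, hw, hzw⟩ := Shatters.exists_mem_le hz
  exact hzw.trans (hF hw)

theorem not_shatters_of_notMem (hxy : x ≤ y) (hx : x ∉ F) (hF : F ⊆ Iic y) :
    ¬ Shatters F y := by
  intro h
  obtain ⟨w, hw, hwy⟩ := h x hxy
  rw [inf_eq_left.2 (hF hw)] at hwy
  exact hx (hwy ▸ hw)

theorem not_shatters_of_forall_le (hxz : x < z) (hF : ∀ w ∈ F, x ≤ w → z ≤ w) :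
    ¬ Shatters F z := by
  intro h
  obtain ⟨w, hw, hwz⟩ := h x hxz.le
  have hxw : x ≤ w := hwz ▸ inf_le_left
  rw [inf_eq_right.2 (hF w hw hxw)] at hwz
  exact hxz.ne hwz.symm

end Shatters

/-- A finite lattice that is not relatively complemented (it has a 3-element interval)
has a family shattering strictly fewer elements than its cardinality. -/
theorem not_ssp_of_not_rc {L : Type*} [Lattice L] [Fintype L]
    (h : ∃ x y : L, x < y ∧ ∃! z : L, x < z ∧ z < y) :
    ∃ F : Set L, (Str F).ncard < F.ncard := by
  obtain ⟨x, y, hxy, z, hz, huniq⟩ := h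
  have hIoo : Ioo x y = {z} := eq_singleton_iff_unique_mem.2 ⟨hz, huniq⟩
  refine ⟨Iic y \ {x}, ?_⟩
  have hStr : Str (Iic y \ {x}) ⊆ Iic y \ {y, z} := by
    intro u hu
    refine ⟨Str_subset_Iic sdiff_subset hu, ?_⟩
    rintro (rfl | rfl)
    · exact not_shatters_of_notMem hxy.le (fun hx ↦ hx.2 rfl) sdiff_subset hu
    · refine not_shatters_of_forall_le hz.1 (fun w hw hxw ↦ ?_) hu
      exact le_of_Ioo_eq_singleton hIoo (hxw.lt_of_ne' hw.2) hw.1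
  calc (Str (Iic y \ {x})).ncard ≤ (Iic y \ {y, z}).ncard := ncard_le_ncard hStr (toFinite _)
    _ < (Iic y \ {x}).ncard :=
      ncard_sdiff_pair_lt_ncard_sdiff_singleton (s := Iic y) (toFinite _) le_rfl hz.2.le hz.2.ne' x
end

section
/- If L and K are finite lattices each with the SSP property (every family shatters at least as many elements as its cardinality), then the product lattice L × K also has the SSP property. -/
open scoped Classical

/-- A finite lattice is SSP if every family shatters at least as many elements as
its cardinality. -/
def IsSSP (M : Type*) [SemilatticeInf M] : Prop :=
  ∀ F : Set M, F.ncard ≤ (Str F).ncard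

open Finset in
lemma ncard_eq_sum_ite {α : Type*} [Fintype α] (S : Set α) :
    S.ncard = ∑ a : α, if a ∈ S then 1 else 0 := by
  classical
  rw [Set.ncard_eq_toFinset_card']
  rw [show S.toFinset = Finset.univ.filter (fun a => a ∈ S) by
    ext a; simp]
  rw [Finset.card_filter]

open Finset in
lemma ncard_fiber_sum {α β : Type*} [Fintype α] [Fintype β] (S : Set (α × β)) :
    S.ncard = ∑ a : α, {b | (a, b) ∈ S}.ncard := by
  classical
  rw [ncard_eq_sum_ite, Fintype.sum_prod_type]
  refine Finset.sum_congr rfl fun a _ => ?_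
  rw [ncard_eq_sum_ite]
  rfl

open Finset in
lemma sum_ncard_swap {α β : Type*} [Fintype α] [Fintype β] (P : α → β → Prop) :
    ∑ a : α, {b | P a b}.ncard = ∑ b : β, {a | P a b}.ncard := by
  classical
  simp only [ncard_eq_sum_ite]
  exact Finset.sum_comm

/-- The product of two SSP lattices is SSP. -/
theorem product_ssp {L K : Type*} [Lattice L] [Lattice K] [Fintype L] [Fintype K]
    (hL : IsSSP L) (hK : IsSSP K) : IsSSP (L × K) := by
  intro F
  classical
  set Fib : K → Set L := fun w => {u | (u, w) ∈ F} with hFib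
  set T : L → Set K := fun z1 => {w | z1 ∈ Str (Fib w)} with hT
  have key : ∀ z1 z2, z2 ∈ Str (T z1) → (z1, z2) ∈ Str F := by
    intro z1 z2 hz2
    rintro ⟨x, y⟩ hxy
    obtain ⟨w, hwT, hwy⟩ := hz2 y hxy.2
    obtain ⟨u, huF, hux⟩ := hwT x hxy.1
    exact ⟨(u, w), huF, Prod.ext hux hwy⟩
  calc F.ncard = ∑ w : K, (Fib w).ncard := by
        rw [show F.ncard = ∑ w : K, {u : L | (w, u) ∈ (Prod.swap '' F)}.ncard from ?_]
        · refine Finset.sum_congr rfl fun w _ => ?_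
          congr 1
          ext u
          simp [hFib, Prod.swap_eq_iff_eq_swap]
        · rw [← ncard_fiber_sum]
          exact (Set.ncard_image_of_injective _ Prod.swap_injective).symm
    _ ≤ ∑ w : K, (Str (Fib w)).ncard := Finset.sum_le_sum fun w _ => hL (Fib w)
    _ = ∑ z1 : L, (T z1).ncard := by
        have := sum_ncard_swap (fun w (z1 : L) => z1 ∈ Str (Fib w))
        simpa [hT] using this
    _ ≤ ∑ z1 : L, (Str (T z1)).ncard := Finset.sum_le_sum fun z1 _ => hK (T z1)
    _ ≤ ∑ z1 : L, {z2 : K | (z1, z2) ∈ Str F}.ncard := by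
        refine Finset.sum_le_sum fun z1 _ => ?_
        exact Set.ncard_le_ncard (fun z2 hz2 => key z1 z2 hz2) (Set.toFinite _)
    _ = (Str F).ncard := (ncard_fiber_sum (Str F)).symm
end

section
/- Let L be a finite relatively complemented lattice with minimal element 0 and maximal element e, and let F ⊆ L be a family such that the complement L \ Str(F) of the set of shattered elements has exactly one minimal element. Then |F| ≤ |Str(F)|. -/
open scoped Classical

/-- A finite lattice is relatively complemented iff it has no 3-element interval
(Björner's characterization). -/
def IsRC (L : Type*) [Lattice L] : Prop :=
  ¬ ∃ x y : L, x < y ∧ ∃! z : L, x < z ∧ z < y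

/-!
Every element outside `Str F` lies above the unique minimal one, `m`, so everything not above
`m` is shattered. Since `m` is not shattered, some `a ≤ m` is never of the form `w ⊓ m` with
`w ∈ F`. Sending each `w ∈ F` above `m` to a complement `z` of `m` in `[a, w]` and fixing the
other elements of `F` injects `F` into the elements not above `m`: `w = m ⊔ z` recovers `w`,
and `m ⊓ z = a` keeps `z` off both `F` and the up-set of `m`. Relative complements exist by
induction on the size of the interval: an element strictly between `a` and `x` (or between `x`
and `b`) splits the problem into two smaller intervals, and otherwise `a ⋖ x ⋖ b` and the absence
of 3-element intervals yields a second element strictly between `a` and `b`.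
-/

section RelCompl

variable {L : Type*} [Lattice L]

/-- `z` is a complement of `x` in the interval `[a, b]`. -/
def IsRelCompl (a b x z : L) : Prop := x ⊓ z = a ∧ x ⊔ z = b

theorem IsRelCompl.trans_lower {a b u x y z : L} (hux : u ≤ x) (hy : IsRelCompl u b x y)
    (hz : IsRelCompl a y u z) : IsRelCompl a b x z := by
  have hzy : z ≤ y := hz.2 ▸ le_sup_right
  constructor
  · rw [← inf_eq_right.2 hzy, ← inf_assoc, hy.1, hz.1]
  · rw [← sup_eq_left.2 hux, sup_assoc, hz.2, hy.2]

theorem IsRelCompl.trans_upper {a b u x y z : L} (hxu : x ≤ u) (hy : IsRelCompl a u x y)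
    (hz : IsRelCompl y b u z) : IsRelCompl a b x z := by
  have hyz : y ≤ z := hz.1 ▸ inf_le_right
  constructor
  · rw [← inf_eq_left.2 hxu, inf_assoc, hz.1, hy.1]
  · rw [← sup_eq_right.2 hyz, ← sup_assoc, hy.2, hz.2]

theorem isRelCompl_of_covBy {a b x v : L} (hax : a ⋖ x) (hxb : x ⋖ b) (hav : a < v)
    (hvb : v < b) (hvx : v ≠ x) : IsRelCompl a b x v := by
  constructor
  · refine (hax.eq_or_eq (le_inf hax.le hav.le) inf_le_left).resolve_right fun h => ?_
    exact hxb.2 ((inf_eq_left.1 h).lt_of_ne hvx.symm) hvb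
  · refine (hxb.eq_or_eq le_sup_left (sup_le hxb.le hvb.le)).resolve_left fun h => ?_
    exact hax.2 hav ((sup_eq_left.1 h).lt_of_ne hvx)

theorem IsRC.exists_isRelCompl [Finite L] (hRC : IsRC L) {a x b : L} (hax : a ≤ x)
    (hxb : x ≤ b) : ∃ z, IsRelCompl a b x z := by
  induction hn : (Set.Icc a b).ncard using Nat.strong_induction_on generalizing a x b with
  | _ n ih =>
  subst hn
  have ncard_lt {c d : L} (h : Set.Icc c d ⊂ Set.Icc a b) :
      (Set.Icc c d).ncard < (Set.Icc a b).ncard := Set.ncard_lt_ncard h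
  rcases hax.eq_or_lt with rfl | hax'
  · exact ⟨b, inf_eq_left.2 hxb, sup_eq_right.2 hxb⟩
  rcases hxb.eq_or_lt with rfl | hxb'
  · exact ⟨a, inf_eq_right.2 hax, sup_eq_left.2 hax⟩
  by_cases hlow : ∃ u, a < u ∧ u < x
  · obtain ⟨u, hau, hux⟩ := hlow
    obtain ⟨y, hy⟩ := ih _ (ncard_lt (Set.Icc_ssubset_Icc_left (hax.trans hxb) hau le_rfl))
      hux.le hxb rfl
    have hyb : y < b := (hy.2 ▸ le_sup_right : y ≤ b).lt_of_ne fun hyb =>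
      hux.ne' (by rw [← hy.1, hyb, inf_eq_left.2 hxb])
    obtain ⟨z, hz⟩ := ih _ (ncard_lt (Set.Icc_ssubset_Icc_right (hax.trans hxb) le_rfl hyb))
      hau.le (hy.1 ▸ inf_le_right) rfl
    exact ⟨z, hy.trans_lower hux.le hz⟩
  by_cases hup : ∃ u, x < u ∧ u < b
  · obtain ⟨u, hxu, hub⟩ := hup
    obtain ⟨y, hy⟩ := ih _ (ncard_lt (Set.Icc_ssubset_Icc_right (hax.trans hxb) le_rfl hub))
      hax hxu.le rfl
    have hay : a < y := (hy.1 ▸ inf_le_right : a ≤ y).lt_of_ne fun hay =>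
      hxu.ne (by rw [← hy.2, ← hay, sup_eq_left.2 hax])
    obtain ⟨z, hz⟩ := ih _ (ncard_lt (Set.Icc_ssubset_Icc_left (hax.trans hxb) hay le_rfl))
      (hy.2 ▸ le_sup_right) hub.le rfl
    exact ⟨z, hy.trans_upper hxu.le hz⟩
  have hax_cov : a ⋖ x := ⟨hax', fun u hau hux => hlow ⟨u, hau, hux⟩⟩
  have hxb_cov : x ⋖ b := ⟨hxb', fun u hxu hub => hup ⟨u, hxu, hub⟩⟩
  obtain ⟨v, ⟨hav, hvb⟩, hvx⟩ : ∃ v, (a < v ∧ v < b) ∧ v ≠ x := by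
    by_contra! h
    exact hRC ⟨a, b, hax'.trans hxb', x, ⟨hax', hxb'⟩, h⟩
  exact ⟨v, isRelCompl_of_covBy hax_cov hxb_cov hav hvb hvx⟩

end RelCompl

theorem le_of_forall_minimal_eq {α : Type*} [PartialOrder α] [Finite α] {P : α → Prop} {m z : α}
    (h : ∀ u, Minimal P u → u = m) (hz : P z) : m ≤ z := by
  obtain ⟨u, huz, hu⟩ := exists_minimal_le_of_wellFoundedLT P z hz
  exact h u hu ▸ huz

theorem ncard_le_ncard_setOf_not_le {L : Type*} [Lattice L] [Finite L] {F : Set L} {a m : L}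
    (hcompl : ∀ w, m ≤ w → ∃ z, IsRelCompl a w m z) (hF : ∀ w ∈ F, w ⊓ m ≠ a) :
    F.ncard ≤ {z | ¬ m ≤ z}.ncard := by
  choose! c hc using hcompl
  have hcm {w : L} (hw : w ∈ F) (hmw : m ≤ w) : ¬ m ≤ c w := fun hmc => by
    have := (hc w hmw).1
    rw [inf_eq_left.2 hmc] at this
    exact hF w hw (by rw [inf_eq_right.2 hmw, this])
  refine Set.ncard_le_ncard_of_injOn (fun w => if m ≤ w then c w else w) ?_ ?_ (Set.toFinite _)
  · intro w hw
    split_ifs with hmw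
    exacts [hcm hw hmw, hmw]
  · intro w₁ hw₁ w₂ hw₂ heq
    dsimp only at heq
    split_ifs at heq with h₁ h₂ h₂
    · rw [← (hc w₁ h₁).2, ← (hc w₂ h₂).2, heq]
    · exact absurd (heq ▸ (hc w₁ h₁).1) (by rw [inf_comm]; exact hF w₂ hw₂)
    · exact absurd (heq ▸ (hc w₂ h₂).1) (by rw [inf_comm]; exact hF w₁ hw₁)
    · exact heq

theorem ssp_of_unique_minimal_nonshattered_general {L : Type*} [Lattice L] [Fintype L]
    (hRC : IsRC L) (F : Set L)
    (hmin : ∃! m : L, m ∈ (Str F)ᶜ ∧ ∀ u ∈ (Str F)ᶜ, ¬ u < m) :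
    F.ncard ≤ (Str F).ncard := by
  obtain ⟨m, ⟨hm, -⟩, hm_unique⟩ := hmin
  have hle : ∀ z ∉ Str F, m ≤ z := fun z hz =>
    le_of_forall_minimal_eq (P := (· ∈ (Str F)ᶜ))
      (fun u hu => hm_unique u ⟨hu.1, fun v hv hvu => minimal_iff_forall_lt.1 hu |>.2 hvu hv⟩) hz
  obtain ⟨a, ham, ha⟩ : ∃ a ≤ m, ∀ w ∈ F, w ⊓ m ≠ a := by
    simpa [Str, Shatters] using hm
  calc F.ncard ≤ {z | ¬ m ≤ z}.ncard :=
        ncard_le_ncard_setOf_not_le (fun w hmw => hRC.exists_isRelCompl ham hmw) ha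
    _ ≤ (Str F).ncard := Set.ncard_le_ncard fun z hz => by_contra fun h => hz (hle z h)

/-- In a finite RC lattice, if the set of non-shattered elements has exactly one
minimal element, then `|F| ≤ |Str F|`. -/
theorem ssp_of_unique_minimal_nonshattered {L : Type*} [Lattice L] [Fintype L]
    [BoundedOrder L] (hRC : IsRC L) (F : Set L)
    (hmin : ∃! m : L, m ∈ (Str F)ᶜ ∧ ∀ u ∈ (Str F)ᶜ, ¬ u < m) :
    F.ncard ≤ (Str F).ncard :=
  ssp_of_unique_minimal_nonshattered_general hRC F hmin
end

section
/- Let L be a finite ranked lattice with nonvanishing Möbius function and A ⊆ L a maximal antichain. If F ⊆ L shatters no element of A, then |F| ≤ |F_A|, where F_A = {x ∈ L : x < y for some y ∈ A}. Moreover, F_A itself shatters no element of A. -/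
open scoped Classical

lemma interval_split {L : Type*} [PartialOrder L] [Fintype L] (x y : L) (hxy : x ≤ y) :
    Finset.univ.filter (fun t => x ≤ t ∧ t ≤ y)
      = insert y (Finset.univ.filter (fun t => x ≤ t ∧ t < y)) := by
  ext t
  simp only [Finset.mem_insert, Finset.mem_filter, Finset.mem_univ, true_and]
  constructor
  · rintro ⟨h1, h2⟩
    rcases eq_or_lt_of_le h2 with rfl | h
    · exact Or.inl rfl
    · exact Or.inr ⟨h1, h⟩
  · rintro (rfl | ⟨h1, h2⟩)
    · exact ⟨hxy, le_refl _⟩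
    · exact ⟨h1, le_of_lt h2⟩

lemma mu_sum {L : Type*} [PartialOrder L] [Fintype L] (x y : L) (hxy : x ≤ y) :
    ∑ t ∈ Finset.univ.filter (fun t => x ≤ t ∧ t ≤ y), mu x t
      = if x = y then 1 else 0 := by
  rcases eq_or_lt_of_le hxy with rfl | hlt
  · have h : Finset.univ.filter (fun t => x ≤ t ∧ t ≤ x) = {x} := by
      ext t
      simp only [Finset.mem_filter, Finset.mem_univ, true_and, Finset.mem_singleton]
      constructor
      · rintro ⟨h1, h2⟩; exact le_antisymm h2 h1
      · rintro rfl; exact ⟨le_refl _, le_refl _⟩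
    rw [h, Finset.sum_singleton, mu]
    simp
  · have hne : x ≠ y := ne_of_lt hlt
    rw [interval_split x y hxy, Finset.sum_insert (by simp)]
    have hmueq : mu x y = - ∑ t ∈ Finset.univ.filter (fun t => x ≤ t ∧ t < y), mu x t := by
      rw [mu]
      simp only [hne, if_false, hxy, if_true]
      congr 1
      exact Finset.sum_attach _ _
    rw [hmueq]
    simp [hne]

lemma mu_inv {L : Type*} [Lattice L] [Fintype L] (z w x : L) (hx : x ≤ z) :
    ∑ t ∈ Finset.univ.filter (fun t => x ≤ t ∧ t ≤ z),
        mu x t * (if t ≤ w then (1:ℚ) else 0)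
      = if w ⊓ z = x then 1 else 0 := by
  have h1 : ∀ t ∈ Finset.univ.filter (fun t => x ≤ t ∧ t ≤ z),
      mu x t * (if t ≤ w then (1:ℚ) else 0) = if t ≤ w then mu x t else 0 := by
    intro t _
    by_cases h : t ≤ w <;> simp [h]
  rw [Finset.sum_congr rfl h1, ← Finset.sum_filter]
  have h2 : (Finset.univ.filter (fun t => x ≤ t ∧ t ≤ z)).filter (fun t => t ≤ w)
      = Finset.univ.filter (fun t => x ≤ t ∧ t ≤ w ⊓ z) := by
    ext t
    simp only [Finset.mem_filter, Finset.mem_univ, true_and, le_inf_iff]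
    tauto
  rw [h2]
  by_cases hxwz : x ≤ w ⊓ z
  · rw [mu_sum x (w ⊓ z) hxwz]
    by_cases h : w ⊓ z = x
    · simp [h]
    · rw [if_neg (fun hc => h hc.symm), if_neg h]
  · have hempty : Finset.univ.filter (fun t => x ≤ t ∧ t ≤ w ⊓ z) = ∅ := by
      ext t
      simp only [Finset.mem_filter, Finset.mem_univ, true_and, Finset.notMem_empty,
        iff_false]
      rintro ⟨ht1, ht2⟩
      exact hxwz (ht1.trans ht2)
    have h : w ⊓ z ≠ x := fun h => hxwz (h ▸ le_refl x)
    rw [hempty]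
    simp [h]

/-- For a finite ranked lattice with nonvanishing Möbius function and a maximal
antichain `A`: if `F` shatters no element of `A` then `|F| ≤ |F_A|`, where
`F_A = {x : x < y for some y ∈ A}`; moreover `F_A` shatters no element of `A`. -/
theorem antichain_bound {L : Type*} [Lattice L] [Fintype L] [OrderBot L]
    (r : L → ℕ) (hr0 : r ⊥ = 0) (hrcov : ∀ x y : L, x ⋖ y → r y = r x + 1)
    (hmu : ∀ x y : L, x ≤ y → mu x y ≠ 0)
    (A : Set L) (hA : IsAntichain (· ≤ ·) A)
    (hAmax : ∀ B : Set L, IsAntichain (· ≤ ·) B → A ⊆ B → B = A)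
    (F : Set L) (hF : ∀ a ∈ A, ¬ Shatters F a) :
    F.ncard ≤ {x : L | ∃ y ∈ A, x < y}.ncard ∧
    ∀ a ∈ A, ¬ Shatters {x : L | ∃ y ∈ A, x < y} a := by
  classical
  set FA : Set L := {x : L | ∃ y ∈ A, x < y} with hFAdef
  -- every element is comparable to some element of A
  have hcomp : ∀ z : L, ∃ a ∈ A, a ≤ z ∨ z ≤ a := by
    intro z
    by_contra h
    push_neg at h
    have hzA : z ∉ A := fun hz => by
      have := h z hz
      simp at this
    have hanti : IsAntichain (· ≤ ·) (A ∪ {z}) := by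
      rintro p (hp | hp) q (hq | hq) hpq
      · exact hA hp hq hpq
      · rintro hle
        rcases hq with rfl
        exact (h p hp).1 hle
      · rintro hle
        rcases hp with rfl
        exact (h q hq).2 hle
      · rcases hp with rfl; rcases hq with rfl
        exact absurd rfl hpq
    have := hAmax (A ∪ {z}) hanti (Set.subset_union_left)
    apply hzA
    rw [← this]
    exact Or.inr rfl
  constructor
  · -- the cardinality bound
    haveI : Fintype ↥F := Fintype.ofFinite _
    set v : L → (↥F → ℚ) := fun z w => if z ≤ (w : L) then 1 else 0 with hv
    -- main claim: every v z is in the span of v '' FA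
    have main : ∀ z : L, v z ∈ Submodule.span ℚ (v '' FA) := by
      intro z
      induction z using WellFoundedLT.induction with
      | _ z ih =>
        by_cases hz : z ∈ FA
        · exact Submodule.subset_span ⟨z, hz, rfl⟩
        · obtain ⟨a, ha, hcase⟩ := hcomp z
          have haz : a ≤ z := by
            rcases hcase with h | h
            · exact h
            · rcases eq_or_lt_of_le h with rfl | h'
              · exact le_rfl
              · exact absurd ⟨a, ha, h'⟩ hz
          have hnsh : ¬ Shatters F z := by
            intro hs
            apply hF a ha
            intro x hxa
            obtain ⟨w, hw, hwz⟩ := hs x (hxa.trans haz)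
            refine ⟨w, hw, ?_⟩
            have hza : z ⊓ a = a := inf_eq_right.mpr haz
            calc w ⊓ a = w ⊓ (z ⊓ a) := by rw [hza]
              _ = (w ⊓ z) ⊓ a := by rw [inf_assoc]
              _ = x ⊓ a := by rw [hwz]
              _ = x := inf_eq_left.mpr hxa
          simp only [Shatters] at hnsh
          push_neg at hnsh
          obtain ⟨x, hxz, hxw⟩ := hnsh
          have hzero : ∑ t ∈ Finset.univ.filter (fun t => x ≤ t ∧ t ≤ z),
              mu x t • v t = 0 := by
            funext w
            rw [Finset.sum_apply]
            simp only [Pi.smul_apply, smul_eq_mul, Pi.zero_apply]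
            have := mu_inv z (w : L) x hxz
            rw [hv]
            simp only []
            rw [this]
            simp [hxw (w : L) w.2]
          rw [interval_split x z hxz, Finset.sum_insert (by simp)] at hzero
          have hvec : mu x z • v z
              = - ∑ t ∈ Finset.univ.filter (fun t => x ≤ t ∧ t < z), mu x t • v t := by
            rw [eq_neg_iff_add_eq_zero]
            exact hzero
          have hmem : (- ∑ t ∈ Finset.univ.filter (fun t => x ≤ t ∧ t < z),
              mu x t • v t) ∈ Submodule.span ℚ (v '' FA) := by
            apply Submodule.neg_mem
            apply Submodule.sum_mem
            intro t ht
            have htlt : t < z := (Finset.mem_filter.mp ht).2.2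
            exact Submodule.smul_mem _ _ (ih t htlt)
          have hvz : v z = (mu x z)⁻¹ • (mu x z • v z) := by
            rw [smul_smul, inv_mul_cancel₀ (hmu x z hxz), one_smul]
          rw [hvz, hvec]
          exact Submodule.smul_mem _ _ hmem
    -- the single functions lie in the span of the range of v
    have hsingle : ∀ w : ↥F, Pi.single w (1:ℚ) ∈ Submodule.span ℚ (Set.range v) := by
      intro w
      induction w using WellFoundedGT.induction with
      | _ w ih =>
        have hid : v (w : L) = Pi.single w 1
            + ∑ w' ∈ Finset.univ.filter (fun w' => w < w'), Pi.single w' (1:ℚ) := by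
          funext u
          simp only [Pi.add_apply, Finset.sum_apply, Pi.single_apply, hv]
          rw [Finset.sum_ite_eq]
          simp only [Finset.mem_filter, Finset.mem_univ, true_and]
          by_cases h : (w : L) ≤ (u : L)
          · rcases eq_or_lt_of_le h with heq | hlt
            · have : u = w := Subtype.ext heq.symm
              subst this
              simp [lt_irrefl]
            · have hne : u ≠ w := fun hc => by
                subst hc; exact lt_irrefl _ hlt
              have hlt' : w < u := Subtype.coe_lt_coe.mp hlt
              simp [h, hne, hlt']
          · have hne : u ≠ w := fun hc => by subst hc; exact h le_rfl
            have hnlt : ¬ w < u := fun hc => h (le_of_lt (Subtype.coe_lt_coe.mpr hc))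
            simp [h, hne, hnlt]
        have : Pi.single w (1:ℚ) = v (w : L)
            - ∑ w' ∈ Finset.univ.filter (fun w' => w < w'), Pi.single w' (1:ℚ) := by
          rw [hid, add_sub_cancel_right]
        rw [this]
        apply Submodule.sub_mem
        · exact Submodule.subset_span ⟨(w : L), rfl⟩
        · apply Submodule.sum_mem
          intro w' hw'
          exact ih w' (Finset.mem_filter.mp hw').2
    -- hence the span of v '' FA is everything
    have htop : Submodule.span ℚ (v '' FA) = ⊤ := by
      rw [eq_top_iff]
      intro g _
      have hg : g = ∑ w : ↥F, g w • (Pi.single w 1 : ↥F → ℚ) := by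
        funext u
        rw [Finset.sum_apply]
        simp only [Pi.smul_apply, Pi.single_apply, smul_eq_mul]
        rw [Finset.sum_congr rfl (fun w _ => by rw [mul_ite, mul_one, mul_zero]),
          Finset.sum_ite_eq Finset.univ u g]
        simp
      rw [hg]
      apply Submodule.sum_mem
      intro w _
      apply Submodule.smul_mem
      have h1 : Set.range v ⊆ (Submodule.span ℚ (v '' FA) : Set (↥F → ℚ)) := by
        rintro _ ⟨z, rfl⟩
        exact main z
      have h2 : Submodule.span ℚ (Set.range v) ≤ Submodule.span ℚ (v '' FA) :=
        Submodule.span_le.mpr h1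
      exact h2 (hsingle w)
    -- cardinality comparison
    have hFAfin : FA.Finite := Set.toFinite _
    have himg : (v '' FA).Finite := hFAfin.image v
    haveI : Fintype ↥(v '' FA) := himg.fintype
    have hrank : Module.finrank ℚ (↥F → ℚ) ≤ (v '' FA).toFinset.card := by
      rw [← finrank_top ℚ (↥F → ℚ), ← htop]
      exact finrank_span_le_card (v '' FA)
    have hcardF : F.ncard = Module.finrank ℚ (↥F → ℚ) := by
      rw [Module.finrank_fintype_fun_eq_card, ← Nat.card_eq_fintype_card,
        Nat.card_coe_set_eq]
    have h3 : (v '' FA).toFinset.card = (v '' FA).ncard := by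
      rw [Set.ncard_eq_toFinset_card']
    have h4 : (v '' FA).ncard ≤ FA.ncard := Set.ncard_image_le hFAfin
    omega
  · -- FA shatters no element of A
    intro a ha hsh
    obtain ⟨w, hw, hwa⟩ := hsh a le_rfl
    obtain ⟨y, hy, hwy⟩ := hw
    have h1 : a ≤ w := by rw [← hwa]; exact inf_le_left
    have h2 : a < y := lt_of_le_of_lt h1 hwy
    exact hA ha hy (ne_of_lt h2) h2.le
end

section
/- Let L be a finite lattice with minimal element 0 and maximal element e, and consider the functions v_p : (L \ {e}) → ℚ for p ∈ L defined by v_p(y) = 1 if y ≤ p and 0 otherwise. If Σ_{a ∈ L} c_a v_a = 0 (as a function on L \ {e}), then c_a = μ(a,e) · c_e for all a ∈ L. -/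
open scoped Classical

lemma mu_eq {L : Type*} [PartialOrder L] [Fintype L] (x y : L) :
    mu x y = if x = y then 1 else if x ≤ y then
      - ∑ z ∈ (Finset.univ.filter fun z => x ≤ z ∧ z < y), mu x z else 0 := by
  rw [mu, Finset.sum_attach]

lemma mu_not_le {L : Type*} [PartialOrder L] [Fintype L] {x y : L} (hxy : ¬ x ≤ y) :
    mu x y = 0 := by
  rw [mu_eq]
  have : x ≠ y := fun h => hxy (h ▸ le_refl x)
  simp [this, hxy]

lemma mu_sum_le {L : Type*} [PartialOrder L] [Fintype L] (x y : L) (hxy : x ≤ y) :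
    ∑ z ∈ Finset.univ.filter (fun z => x ≤ z ∧ z ≤ y), mu x z
      = if x = y then 1 else 0 := by
  have hsplit : Finset.univ.filter (fun z : L => x ≤ z ∧ z ≤ y)
      = insert y (Finset.univ.filter (fun z : L => x ≤ z ∧ z < y)) := by
    ext z
    simp only [Finset.mem_insert, Finset.mem_filter, Finset.mem_univ, true_and]
    constructor
    · rintro ⟨h1, h2⟩
      rcases h2.lt_or_eq with h | h
      · exact Or.inr ⟨h1, h⟩
      · exact Or.inl h
    · rintro (rfl | ⟨h1, h2⟩)
      · exact ⟨hxy, le_refl z⟩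
      · exact ⟨h1, h2.le⟩
  have hy : y ∉ Finset.univ.filter (fun z : L => x ≤ z ∧ z < y) := by simp
  rw [hsplit, Finset.sum_insert hy]
  by_cases hxy' : x = y
  · subst hxy'
    have : Finset.univ.filter (fun z : L => x ≤ z ∧ z < x) = ∅ := by
      ext z; simp only [Finset.mem_filter, Finset.mem_univ, true_and, Finset.notMem_empty,
        iff_false]
      rintro ⟨h1, h2⟩; exact absurd (h1.trans_lt h2) (lt_irrefl x)
    rw [this, Finset.sum_empty, mu_eq]
    simp
  · rw [mu_eq, if_neg hxy', if_pos hxy]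
    simp [hxy']

/-- Any linear dependency of the functions `v_p(y) = [y ≤ p]` on `L \ {⊤}`
has coefficients proportional to the Möbius function: `c_a = μ(a, ⊤) · c_⊤`. -/
theorem dependency_is_mobius {L : Type*} [Lattice L] [Fintype L] [BoundedOrder L]
    (c : L → ℚ)
    (h : ∀ y : L, y ≠ ⊤ → ∑ a : L, c a * (if y ≤ a then (1 : ℚ) else 0) = 0) :
    ∀ a : L, c a = mu a ⊤ * c ⊤ := by
  intro a
  have key : ∀ b : L, ∑ y : L, mu a y * (if y ≤ b then (1 : ℚ) else 0)
      = if a = b then 1 else 0 := by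
    intro b
    have h1 : ∑ y : L, mu a y * (if y ≤ b then (1 : ℚ) else 0)
        = ∑ y ∈ Finset.univ.filter (fun y : L => y ≤ b), mu a y := by
      rw [Finset.sum_filter]
      congr 1; ext y
      by_cases hy : y ≤ b <;> simp [hy]
    have h2 : ∑ y ∈ Finset.univ.filter (fun y : L => y ≤ b), mu a y
        = ∑ y ∈ Finset.univ.filter (fun y : L => a ≤ y ∧ y ≤ b), mu a y := by
      symm
      apply Finset.sum_subset
      · intro z hz
        simp only [Finset.mem_filter, Finset.mem_univ, true_and] at hz ⊢
        exact hz.2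
      · intro z hz hz2
        simp only [Finset.mem_filter, Finset.mem_univ, true_and] at hz hz2
        exact mu_not_le (fun hle => hz2 ⟨hle, hz⟩)
    rw [h1, h2]
    by_cases hab : a ≤ b
    · exact mu_sum_le a b hab
    · have : Finset.univ.filter (fun y : L => a ≤ y ∧ y ≤ b) = ∅ := by
        ext z; simp only [Finset.mem_filter, Finset.mem_univ, true_and,
          Finset.notMem_empty, iff_false]
        rintro ⟨h1, h2⟩; exact hab (h1.trans h2)
      rw [this, Finset.sum_empty]
      have : a ≠ b := fun h => hab (h ▸ le_refl a)
      simp [this]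
  calc c a = ∑ b : L, c b * (if a = b then (1 : ℚ) else 0) := by simp
    _ = ∑ b : L, c b * ∑ y : L, mu a y * (if y ≤ b then (1 : ℚ) else 0) := by
        simp_rw [key]
    _ = ∑ y : L, mu a y * ∑ b : L, c b * (if y ≤ b then (1 : ℚ) else 0) := by
        simp_rw [Finset.mul_sum]
        rw [Finset.sum_comm]
        congr 1; ext b; congr 1; ext y; ring
    _ = mu a ⊤ * c ⊤ := by
        rw [Finset.sum_eq_single ⊤]
        · congr 1
          rw [Finset.sum_eq_single ⊤]
          · simp
          · intro b _ hb
            rw [if_neg (fun hle => hb (top_le_iff.mp hle)), mul_zero]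
          · simp
        · intro y _ hy
          rw [h y hy, mul_zero]
        · simp
end

section
/- Let L be a finite lattice with minimal element 0 and maximal element e satisfying μ(a,e) ≠ 0 for all a ≠ 0, and let F ⊆ L with F ≠ L and F ≠ L \ {0}. Then the functions {v_p : p ∈ F}, where v_p : (L \ {e}) → ℚ is given by v_p(y) = [y ≤ p], are linearly independent. -/
open scoped Classical

lemma mu_eq_zero_of_not_le {L : Type*} [PartialOrder L] [Fintype L] {x y : L}
    (h : ¬ x ≤ y) : mu x y = 0 := by
  rw [mu]
  rw [if_neg (fun hxy => h (le_of_eq hxy)), if_neg h]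

lemma sum_mu_Icc {L : Type*} [PartialOrder L] [Fintype L] (q p : L) :
    ∑ y ∈ Finset.univ.filter (fun y => q ≤ y ∧ y ≤ p), mu q y
      = if q = p then 1 else 0 := by
  by_cases hqp : q = p
  · subst hqp
    have hset : Finset.univ.filter (fun y => q ≤ y ∧ y ≤ q) = {q} := by
      ext y
      simp only [Finset.mem_filter, Finset.mem_univ, true_and, Finset.mem_singleton]
      constructor
      · rintro ⟨h1, h2⟩; exact le_antisymm h2 h1
      · rintro rfl; exact ⟨le_refl _, le_refl _⟩
    rw [hset, Finset.sum_singleton, mu_self, if_pos rfl]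
  · rw [if_neg hqp]
    by_cases hle : q ≤ p
    · have hset : Finset.univ.filter (fun y => q ≤ y ∧ y ≤ p)
          = insert p (Finset.univ.filter (fun y => q ≤ y ∧ y < p)) := by
        ext y
        simp only [Finset.mem_filter, Finset.mem_univ, true_and, Finset.mem_insert]
        constructor
        · rintro ⟨h1, h2⟩
          rcases lt_or_eq_of_le h2 with h | h
          · exact Or.inr ⟨h1, h⟩
          · exact Or.inl h
        · rintro (rfl | ⟨h1, h2⟩)
          · exact ⟨hle, le_refl _⟩
          · exact ⟨h1, le_of_lt h2⟩
      rw [hset, Finset.sum_insert (by simp)]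
      have hmup : mu q p
          = - ∑ z ∈ (Finset.univ.filter fun z => q ≤ z ∧ z < p).attach, mu q z.1 := by
        rw [mu]; rw [if_neg hqp, if_pos hle]
      rw [hmup, Finset.sum_attach _ (fun z => mu q z)]
      ring
    · have hset : Finset.univ.filter (fun y => q ≤ y ∧ y ≤ p) = ∅ := by
        ext y
        simp only [Finset.mem_filter, Finset.mem_univ, true_and, Finset.notMem_empty,
          iff_false, not_and]
        intro h1 h2
        exact hle (h1.trans h2)
      rw [hset, Finset.sum_empty]

lemma mu_zeta {L : Type*} [PartialOrder L] [Fintype L] (q p : L) :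
    ∑ y : L, mu q y * (if y ≤ p then 1 else 0) = if q = p then 1 else 0 := by
  have h1 : ∑ y : L, mu q y * (if y ≤ p then 1 else 0)
      = ∑ y ∈ Finset.univ.filter (fun y => y ≤ p), mu q y := by
    rw [Finset.sum_filter]
    apply Finset.sum_congr rfl
    intro y _
    split <;> simp
  rw [h1, ← sum_mu_Icc q p]
  refine (Finset.sum_subset ?_ ?_).symm
  · intro y hy
    simp only [Finset.mem_filter, Finset.mem_univ, true_and] at hy ⊢
    exact hy.2
  · intro y hy hny
    simp only [Finset.mem_filter, Finset.mem_univ, true_and, not_and] at hy hny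
    exact mu_eq_zero_of_not_le (fun h => hny h hy)

/-- If `μ(a, ⊤) ≠ 0` for all `a ≠ ⊥`, and `F` is a family different from `L` and
`L \ {⊥}`, then the functions `v_p(y) = [y ≤ p]` on `L \ {⊤}`, for `p ∈ F`,
are linearly independent over `ℚ`. -/
theorem v_linearIndependent {L : Type*} [Lattice L] [Fintype L] [BoundedOrder L]
    (hmu : ∀ a : L, a ≠ ⊥ → mu a ⊤ ≠ 0)
    (F : Set L) (hF1 : F ≠ Set.univ) (hF2 : F ≠ Set.univ \ {⊥}) :
    LinearIndependent ℚ
      (fun p : F => fun y : {y : L // y ≠ ⊤} =>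
        if (y : L) ≤ (p : L) then (1 : ℚ) else 0) := by
  rw [Fintype.linearIndependent_iff]
  intro g hg
  set c : L → ℚ := fun p => if h : p ∈ F then g ⟨p, h⟩ else 0 with hc
  set f : L → ℚ := fun y => ∑ p : L, c p * (if y ≤ p then 1 else 0) with hf
  have hcF : ∀ i : F, c (i : L) = g i := fun i => dif_pos i.2
  have hfc : ∀ y : L, f y = ∑ i : F, g i * (if y ≤ (i : L) then 1 else 0) := by
    intro y
    have h1 : ∑ i : F, g i * (if y ≤ (i : L) then 1 else 0)
        = ∑ i : F, c (i : L) * (if y ≤ (i : L) then 1 else 0) := by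
      apply Finset.sum_congr rfl
      intro i _
      rw [hcF]
    rw [h1]
    have h2 : ∑ i : F, c (i : L) * (if y ≤ (i : L) then 1 else 0)
        = ∑ p ∈ F.toFinset, c p * (if y ≤ p then 1 else 0) :=
      Finset.sum_set_coe (f := fun p => c p * (if y ≤ p then 1 else 0)) F
    rw [h2, hf]
    refine (Finset.sum_subset (Finset.subset_univ _) ?_).symm
    intro x _ hx
    rw [Set.mem_toFinset] at hx
    simp [hc, hx]
  have hf0 : ∀ y : L, y ≠ ⊤ → f y = 0 := by
    intro y hy
    rw [hfc]
    have := congr_fun hg ⟨y, hy⟩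
    simpa [Finset.sum_apply] using this
  have hcq : ∀ q : L, c q = mu q ⊤ * f ⊤ := by
    intro q
    have h1 : c q = ∑ p : L, c p * (if q = p then (1 : ℚ) else 0) := by
      simp [mul_ite, mul_one, mul_zero]
    rw [h1]
    have h2 : ∀ p : L, c p * (if q = p then (1 : ℚ) else 0)
        = ∑ y : L, mu q y * (c p * (if y ≤ p then 1 else 0)) := by
      intro p
      rw [← mu_zeta q p, Finset.mul_sum]
      apply Finset.sum_congr rfl
      intro y _
      ring
    rw [Finset.sum_congr rfl (fun p _ => h2 p), Finset.sum_comm]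
    have h3 : ∀ y : L, ∑ p : L, mu q y * (c p * (if y ≤ p then 1 else 0))
        = mu q y * f y := by
      intro y
      rw [hf, Finset.mul_sum]
    rw [Finset.sum_congr rfl (fun y _ => h3 y)]
    apply Fintype.sum_eq_single
    intro y hy
    rw [hf0 y hy, mul_zero]
  by_contra hcon
  push_neg at hcon
  obtain ⟨i, hi⟩ := hcon
  have hfT : f ⊤ ≠ 0 := by
    intro h0
    apply hi
    rw [← hcF i, hcq, h0, mul_zero]
  have hb : ∀ q : L, q ∉ F → q = ⊥ := by
    intro q hq
    have h0 : mu q ⊤ * f ⊤ = 0 := by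
      rw [← hcq]
      exact dif_neg hq
    have hmu0 : mu q ⊤ = 0 := (mul_eq_zero.mp h0).resolve_right hfT
    by_contra hq0
    exact hmu q hq0 hmu0
  by_cases hbF : (⊥ : L) ∈ F
  · apply hF1
    apply Set.eq_univ_iff_forall.mpr
    intro q
    by_contra h
    exact h (hb q h ▸ hbF)
  · apply hF2
    ext q
    simp only [Set.mem_diff, Set.mem_univ, Set.mem_singleton_iff, true_and]
    constructor
    · intro hqF hq
      exact hbF (hq ▸ hqF)
    · intro hq
      by_contra h
      exact hq (hb q h)
end

section
/- In the lattice L of subspaces of F_q^n with n ≥ 2, let U be a subspace of dimension n−1, and let F = {0, F_q^n} ∪ {span(x) : x ∉ U}. Then F has VC dimension 1 (it shatters some 1-dimensional subspace but no 2-dimensional subspace), and |F| = q^{n−1} + 2. -/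
open scoped Classical

/-- In the subspace lattice of `K^n` (`|K| = q`, `n ≥ 2`), the family
`F = {0, K^n} ∪ {span x : x ∉ U}` for a hyperplane `U` has VC dimension 1
and cardinality `q^{n-1} + 2`. -/
theorem maximal_vc_one_family (q n : ℕ) (K : Type*) [Field K] [Fintype K]
    (hq : Fintype.card K = q) (hn : 2 ≤ n)
    (U : Submodule K (Fin n → K)) (hU : Module.finrank K U = n - 1)
    (F : Set (Submodule K (Fin n → K)))
    (hF : F = {⊥, ⊤} ∪ {W | ∃ x : Fin n → K, x ∉ U ∧ W = Submodule.span K {x}}) :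
    (∃ W : Submodule K (Fin n → K), Module.finrank K W = 1 ∧ Shatters F W) ∧
    (∀ W : Submodule K (Fin n → K), Module.finrank K W = 2 → ¬ Shatters F W) ∧
    F.ncard = q ^ (n - 1) + 2 := by
  haveI : NeZero n := ⟨by omega⟩
  have hnK : Module.finrank K (Fin n → K) = n := Module.finrank_fin_fun K
  -- there is a vector outside U
  have hUne : U ≠ ⊤ := by
    intro h
    rw [h, finrank_top, hnK] at hU
    omega
  obtain ⟨x₀, hx₀⟩ : ∃ x, x ∉ U := by
    by_contra h
    push_neg at h
    exact hUne (Submodule.eq_top_iff'.mpr h)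
  have hx₀0 : x₀ ≠ 0 := fun h => hx₀ (h ▸ U.zero_mem)
  refine ⟨⟨Submodule.span K {x₀}, finrank_span_singleton hx₀0, ?_⟩, ?_, ?_⟩
  · -- the line spanned by x₀ is shattered
    intro x hx
    rcases eq_or_lt_of_le hx with h | h
    · exact ⟨Submodule.span K {x₀}, by rw [hF]; exact Or.inr ⟨x₀, hx₀, rfl⟩,
        by rw [inf_idem, h]⟩
    · have hxb : x = ⊥ := by
        have h1 : Module.finrank K x < Module.finrank K (Submodule.span K {x₀}) :=
          Submodule.finrank_lt_finrank_of_lt h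
        rw [finrank_span_singleton hx₀0] at h1
        have := Nat.lt_one_iff.mp h1
        exact Submodule.finrank_eq_zero.mp this
      exact ⟨⊥, by rw [hF]; exact Or.inl (Or.inl rfl), by rw [bot_inf_eq, hxb]⟩
  · -- no plane is shattered
    intro W hW2 hsh
    have hWU : W ⊓ U ≠ ⊥ := by
      intro h
      have h1 := Submodule.finrank_sup_add_finrank_inf_eq W U
      rw [h, finrank_bot, hU, hW2] at h1
      have h2 : Module.finrank K ↥(W ⊔ U) ≤ n := by
        exact le_of_le_of_eq (Submodule.finrank_le _) hnK
      omega
    obtain ⟨v, hvWU, hv0⟩ := Submodule.exists_mem_ne_zero_of_ne_bot hWU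
    have hvW : v ∈ W := hvWU.1
    have hvU : v ∈ U := hvWU.2
    have hle : Submodule.span K {v} ≤ W := (Submodule.span_singleton_le_iff_mem v W).mpr hvW
    obtain ⟨w, hwF, hwinf⟩ := hsh (Submodule.span K {v}) hle
    rw [hF] at hwF
    rcases hwF with (rfl | rfl) | ⟨x, hxU, rfl⟩
    · rw [bot_inf_eq] at hwinf
      exact hv0 (Submodule.span_singleton_eq_bot.mp hwinf.symm)
    · rw [top_inf_eq] at hwinf
      have := finrank_span_singleton (K := K) hv0
      rw [← hwinf, hW2] at this
      omega
    · have hvx : v ∈ Submodule.span K {x} := by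
        have h1 : v ∈ Submodule.span K {x} ⊓ W := by
          rw [hwinf]; exact Submodule.mem_span_singleton_self v
        exact h1.1
      obtain ⟨c, hc⟩ := Submodule.mem_span_singleton.mp hvx
      have hc0 : c ≠ 0 := by
        rintro rfl
        rw [zero_smul] at hc
        exact hv0 hc.symm
      apply hxU
      have : x = c⁻¹ • v := by rw [← hc, smul_smul, inv_mul_cancel₀ hc0, one_smul]
      rw [this]
      exact U.smul_mem _ hvU
  · -- cardinality
    have hsup : U ⊔ Submodule.span K {x₀} = ⊤ := by
      apply Submodule.eq_top_of_finrank_eq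
      rw [hnK]
      have hlt : U < U ⊔ Submodule.span K {x₀} := by
        refine lt_of_le_of_ne le_sup_left ?_
        intro h
        exact hx₀ (h ▸ Submodule.mem_sup_right (Submodule.mem_span_singleton_self x₀))
      have h1 : Module.finrank K U < Module.finrank K ↥(U ⊔ Submodule.span K {x₀}) :=
        Submodule.finrank_lt_finrank_of_lt hlt
      have h2 : Module.finrank K ↥(U ⊔ Submodule.span K {x₀}) ≤ n := by
        exact le_of_le_of_eq (Submodule.finrank_le _) hnK
      omega
    set S : Set (Submodule K (Fin n → K)) :=
      {W | ∃ x : Fin n → K, x ∉ U ∧ W = Submodule.span K {x}} with hS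
    set φ : U → Submodule K (Fin n → K) :=
      fun u => Submodule.span K {(u : Fin n → K) + x₀} with hφ
    have hmemU : ∀ u : U, (u : Fin n → K) + x₀ ∉ U := by
      intro u h
      exact hx₀ (by simpa using U.sub_mem h u.2)
    have hinj : Function.Injective φ := by
      intro u u' h
      have h1 : (u' : Fin n → K) + x₀ ∈ φ u := by
        rw [h]; exact Submodule.mem_span_singleton_self _
      simp only [hφ] at h1
      obtain ⟨c, hc⟩ := Submodule.mem_span_singleton.mp h1
      have hc1 : c = 1 := by
        by_contra hc1
        apply hx₀
        have : (c - 1) • x₀ = (u' : Fin n → K) - c • (u : Fin n → K) := by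
          rw [smul_add] at hc
          have h2 : (u' : Fin n → K) = c • (u : Fin n → K) + c • x₀ - x₀ := by
            rw [hc]; abel
          rw [h2, sub_smul, one_smul]; abel
        have hmem : (c - 1) • x₀ ∈ U := this ▸ U.sub_mem u'.2 (U.smul_mem c u.2)
        have := U.smul_mem (c - 1)⁻¹ hmem
        rwa [smul_smul, inv_mul_cancel₀ (sub_ne_zero.mpr hc1), one_smul] at this
      rw [hc1, one_smul, add_left_inj] at hc
      exact Subtype.ext hc
    have hrange : S = Set.range φ := by
      ext W
      constructor
      · rintro ⟨x, hxU, rfl⟩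
        have hx0 : x ≠ 0 := fun h => hxU (h ▸ U.zero_mem)
        have hxmem : x ∈ U ⊔ Submodule.span K {x₀} := hsup ▸ Submodule.mem_top
        obtain ⟨y, hy, z, hz, hyz⟩ := Submodule.mem_sup.mp hxmem
        obtain ⟨c, hc⟩ := Submodule.mem_span_singleton.mp hz
        have hc0 : c ≠ 0 := by
          rintro rfl
          rw [zero_smul] at hc
          apply hxU
          rw [← hyz, ← hc, add_zero]; exact hy
        refine ⟨⟨c⁻¹ • y, U.smul_mem _ hy⟩, ?_⟩
        have : (c⁻¹ • y : Fin n → K) + x₀ = c⁻¹ • x := by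
          rw [← hyz, ← hc, smul_add, smul_smul, inv_mul_cancel₀ hc0, one_smul]
        simp only [hφ, this]
        exact Submodule.span_singleton_smul_eq (IsUnit.mk0 _ (inv_ne_zero hc0)) x
      · rintro ⟨u, rfl⟩
        exact ⟨(u : Fin n → K) + x₀, hmemU u, rfl⟩
    have hScard : S.ncard = q ^ (n - 1) := by
      have h1 : Nat.card ↥(Set.range φ) = Nat.card U := Nat.card_range_of_injective hinj
      have h2 : Nat.card U = q ^ (n - 1) := by
        haveI : Fintype U := Fintype.ofFinite U
        rw [Nat.card_eq_fintype_card, Module.card_eq_pow_finrank (K := K), hq, hU]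
      rw [hrange, ← Nat.card_coe_set_eq, h1, h2]
    have hSfin : S.Finite := by
      rw [hrange]; exact Set.finite_range φ
    have hdisj : Disjoint ({⊥, ⊤} : Set (Submodule K (Fin n → K))) S := by
      rw [Set.disjoint_left]
      rintro z (rfl | rfl) ⟨x, hxU, hz⟩
      · have hx0 : x ≠ 0 := fun h => hxU (h ▸ U.zero_mem)
        exact hx0 (Submodule.span_singleton_eq_bot.mp hz.symm)
      · have hx0 : x ≠ 0 := fun h => hxU (h ▸ U.zero_mem)
        have := finrank_span_singleton (K := K) hx0
        rw [← hz, finrank_top, hnK] at this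
        omega
    have hbt : (⊥ : Submodule K (Fin n → K)) ≠ ⊤ := by
      intro h
      have := hnK
      rw [← finrank_top K (Fin n → K), ← h, finrank_bot] at this
      omega
    rw [hF, Set.ncard_union_eq hdisj (Set.toFinite _) hSfin, Set.ncard_pair hbt, hScard]
    omega
end

section
/- Let L be a finite relatively complemented lattice and let x ∈ L, y ≤ x. Define D = {u ∈ L : u ⊓ x = y} and N = {a ∈ L : x ≤ a}. Then |N| ≤ |D|: the map sending a ∈ N to a relative complement c(a) of x in the interval [y,a] is an injection from N into D. -/
/-- In a finite relatively complemented lattice (every interval is complemented),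
for `y ≤ x`, the up-set of `x` injects into `{u : u ⊓ x = y}` via relative
complements, so `|{a : x ≤ a}| ≤ |{u : u ⊓ x = y}|`. -/
theorem upset_le_relcomplements {L : Type*} [Lattice L] [Fintype L]
    (hRC : ∀ a b w : L, a ≤ w → w ≤ b → ∃ c : L, a ≤ c ∧ c ≤ b ∧ c ⊓ w = a ∧ c ⊔ w = b)
    (x y : L) (hyx : y ≤ x) :
    {a : L | x ≤ a}.ncard ≤ {u : L | u ⊓ x = y}.ncard := by
  classical
  set f : L → L := fun a => if h : x ≤ a then (hRC y a x hyx h).choose else y with hf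
  apply Set.ncard_le_ncard_of_injOn f
  · intro a ha
    simp only [Set.mem_setOf_eq] at ha ⊢
    simp only [hf, dif_pos ha]
    exact (hRC y a x hyx ha).choose_spec.2.2.1
  · intro a ha b hb hab
    simp only [Set.mem_setOf_eq] at ha hb
    have h1 := (hRC y a x hyx ha).choose_spec.2.2.2
    have h2 := (hRC y b x hyx hb).choose_spec.2.2.2
    simp only [hf, dif_pos ha, dif_pos hb] at hab
    rw [← h1, ← h2, hab]
end
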